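/- Suppose Rev : [v̲, v̄] → ℝ is unimodal with maximizer r ∈ [a_N, b_N] ⊆ [v̲, v̄], where b_N − a_N = (v̄ − v̲)·(2/3)^N, Rev(p) = p · F̄(p⁻) with F̄ a ccdf taking values in [0,1], and Rev(r) ≥ v̲ > 0, and F̄ non-increasing. Then 1 − Rev(a_N)/Rev(r) ≤ ((v̄ − v̲)/v̲) · (2/3)^N. Consequently, for N ≥ log((v̄ − v̲)/(v̲·ε))/log(3/2), the price a_N achieves at least a (1−ε) fraction of the optimal revenue. -/

import Mathlib

/-!
Since `F̄` is non-increasing and bounded by `1`, raising the price from `a_N` to `r` gains at most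
the price difference: `Rev(r) − Rev(a_N) ≤ (r − a_N)·F̄(r) ≤ b_N − a_N`. Dividing by `Rev(r) ≥ v̲`
bounds the relative loss by `(b_N − a_N)/v̲`, and the logarithmic choice of `N` makes this at most `ε`.
-/

open Real

lemma mul_sub_mul_le_sub {p r x y : ℝ} (hp : 0 ≤ p) (hpr : p ≤ r) (hyx : y ≤ x) (hy : y ≤ 1) :
    r * y - p * x ≤ r - p :=
  calc r * y - p * x ≤ r * y - p * y := by gcongr
    _ = (r - p) * y := by ring
    _ ≤ r - p := mul_le_of_le_one_right (sub_nonneg.mpr hpr) hy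

lemma one_sub_div_le_div_of_sub_le {a b d m : ℝ} (hm : 0 < m) (hmb : m ≤ b) (hd : 0 ≤ d)
    (hab : b - a ≤ d) : 1 - a / b ≤ d / m := by
  have hb : 0 < b := hm.trans_le hmb
  calc 1 - a / b = (b - a) / b := by field_simp
    _ ≤ d / b := by gcongr
    _ ≤ d / m := div_le_div_of_nonneg_left hd hm hmb

lemma mul_inv_pow_le_of_log_div_le {c x ε : ℝ} {N : ℕ} (hc : 1 < c) (hε : 0 < ε)
    (hN : log (x / ε) / log c ≤ N) : x * (c ^ N)⁻¹ ≤ ε := by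
  have hcN : 0 < c ^ N := pow_pos (by linarith) N
  have hlog : log (x / ε) ≤ log (c ^ N) := by
    rwa [log_pow, ← div_le_iff₀ (log_pos hc)]
  have hx : x / ε ≤ c ^ N :=
    calc x / ε ≤ exp (log (x / ε)) := le_exp_log _
      _ ≤ exp (log (c ^ N)) := exp_le_exp.mpr hlog
      _ = c ^ N := exp_log hcN
  rw [← div_eq_mul_inv, div_le_iff₀ hcN, mul_comm]
  rwa [div_le_iff₀ hε] at hx

theorem stmt10_general (vlo vhi aN bN r : ℝ) (N : ℕ) (Fl : ℝ → ℝ)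
    (hvlo : 0 < vlo)
    (hsub : Set.Icc aN bN ⊆ Set.Icc vlo vhi) (hr : r ∈ Set.Icc aN bN)
    (hlen : bN - aN = (vhi - vlo) * (2 / 3 : ℝ) ^ N)
    (hanti : AntitoneOn Fl (Set.Icc vlo vhi))
    (hrange : ∀ v ∈ Set.Icc vlo vhi, Fl v ∈ Set.Icc (0 : ℝ) 1)
    (hRevr : vlo ≤ r * Fl r) :
    1 - (aN * Fl aN) / (r * Fl r) ≤ ((vhi - vlo) / vlo) * (2 / 3 : ℝ) ^ N ∧
    (∀ ε : ℝ, 0 < ε →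
      Real.log ((vhi - vlo) / (vlo * ε)) / Real.log (3 / 2) ≤ (N : ℝ) →
      (1 - ε) * (r * Fl r) ≤ aN * Fl aN) := by
  obtain ⟨har, hrb⟩ := hr
  have haI : aN ∈ Set.Icc vlo vhi := hsub ⟨le_rfl, har.trans hrb⟩
  have hrI : r ∈ Set.Icc vlo vhi := hsub ⟨har, hrb⟩
  have hgap : r * Fl r - aN * Fl aN ≤ bN - aN :=
    (mul_sub_mul_le_sub (hvlo.le.trans haI.1) har (hanti haI hrI har) (hrange r hrI).2).trans
      (by linarith)
  have hloss : 1 - (aN * Fl aN) / (r * Fl r) ≤ ((vhi - vlo) / vlo) * (2 / 3 : ℝ) ^ N := by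
    rw [div_mul_eq_mul_div, ← hlen]
    exact one_sub_div_le_div_of_sub_le hvlo hRevr (by linarith) hgap
  refine ⟨hloss, fun ε hε hN => ?_⟩
  have hpow : (2 / 3 : ℝ) ^ N = ((3 / 2 : ℝ) ^ N)⁻¹ := by rw [← inv_pow]; norm_num
  rw [← div_div] at hN
  have hε_loss := hloss.trans (hpow ▸ mul_inv_pow_le_of_log_div_le (by norm_num) hε hN)
  rwa [sub_le_comm, le_div_iff₀ (hvlo.trans_le hRevr)] at hε_loss

/-- Ternary-search guarantee: with Rev(p) = p·F̄(p⁻), the price a_N achieves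
1 − Rev(a_N)/Rev(r) ≤ ((v̄−v̲)/v̲)(2/3)^N, hence a (1−ε) fraction of the optimum once
N ≥ log((v̄−v̲)/(v̲·ε))/log(3/2). -/
theorem stmt10 (vlo vhi aN bN r : ℝ) (N : ℕ) (Fl : ℝ → ℝ)
    (hvlo : 0 < vlo) (hvv : vlo < vhi)
    (hsub : Set.Icc aN bN ⊆ Set.Icc vlo vhi) (hr : r ∈ Set.Icc aN bN)
    (hlen : bN - aN = (vhi - vlo) * (2 / 3 : ℝ) ^ N)
    (hanti : AntitoneOn Fl (Set.Icc vlo vhi))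
    (hrange : ∀ v ∈ Set.Icc vlo vhi, Fl v ∈ Set.Icc (0 : ℝ) 1)
    (hopt : ∀ p ∈ Set.Icc vlo vhi, p * Fl p ≤ r * Fl r)
    (hRevr : vlo ≤ r * Fl r) :
    1 - (aN * Fl aN) / (r * Fl r) ≤ ((vhi - vlo) / vlo) * (2 / 3 : ℝ) ^ N ∧
    (∀ ε : ℝ, 0 < ε →
      Real.log ((vhi - vlo) / (vlo * ε)) / Real.log (3 / 2) ≤ (N : ℝ) →
      (1 - ε) * (r * Fl r) ≤ aN * Fl aN) :=
  stmt10_general vlo vhi aN bN r N Fl hvlo hsub hr hlen hanti hrange hRevr
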